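/- Let s ∈ B_n and 1 ≤ m ≤ n. Then τ(s + ⟨m+1⟩) − τ(s + ⟨m⟩) = 2λ(n+1). -/

import Mathlib

/-- The `j`-th entry (1-indexed) of a finite sequence of positive naturals,
viewed as a natural number. Only used for `1 ≤ j ≤ s.length`. -/
def nthSeq (s : List ℕ+) (j : ℕ) : ℕ := ↑(s.getD (j - 1) 1)

/-- The linear order `⪯` on finite sequences of positive natural numbers:
`s ⪯ t` iff either (a) there is an index `j ≤ min (ℓ s) (ℓ t)` which is the first index where
`s` and `t` differ, and there `s j < t j`, or (b) `ℓ s ≤ ℓ t` and `t` extends `s`. -/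
def sle (s t : List ℕ+) : Prop :=
  (∃ j, 1 ≤ j ∧ j ≤ min s.length t.length ∧
     (∀ i, 1 ≤ i → i < j → nthSeq s i = nthSeq t i) ∧ nthSeq s j < nthSeq t j) ∨
  (s.length ≤ t.length ∧ ∀ j, 1 ≤ j → j ≤ s.length → nthSeq s j = nthSeq t j)

/-- The strict version `≺` of the order `⪯`. -/
def slt (s t : List ℕ+) : Prop := sle s t ∧ s ≠ t

/-- The set `B` of nonempty sequences `s` with `s i ≤ i` for all `1 ≤ i ≤ ℓ s`. -/
def BSet : Set (List ℕ+) := {s | 1 ≤ s.length ∧ ∀ i, 1 ≤ i → i ≤ s.length → nthSeq s i ≤ i}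

/-- `λ n = 1 / (2^n n!)`. -/
noncomputable def lam (n : ℕ) : ℝ := 1 / ((2 : ℝ) ^ n * (n.factorial : ℝ))

/-- `τ s = Σ_{t ∈ B, t ≺ s} λ (ℓ t)`. -/
noncomputable def tau (s : List ℕ+) : ℝ :=
  ∑' t : {t : List ℕ+ // t ∈ BSet ∧ slt t s}, lam t.1.length

/-!
Under `⪯`, which is the lexicographic order on `List ℕ+`, the sequences `t` with
`s ++ [m] ⪯ t ≺ s ++ [m + 1]` are exactly the extensions `s ++ [m] ++ r`. Such an extension lies
in `B` iff its tail satisfies `r i ≤ n + 1 + i`, so there are `(n + 2) ⋯ (n + k + 1)` admissible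
tails of length `k`, each of weight `λ (n + 1 + k)`. Length `k` therefore contributes
`λ (n + 1) / 2 ^ k`, and the geometric series sums to `2 λ (n + 1)`.
-/

theorem nthSeq_cons_one (a : ℕ+) (s : List ℕ+) : nthSeq (a :: s) 1 = a := rfl

theorem nthSeq_cons_succ (a : ℕ+) (s : List ℕ+) {j : ℕ} (hj : 1 ≤ j) :
    nthSeq (a :: s) (j + 1) = nthSeq s j := by
  obtain ⟨i, rfl⟩ := Nat.exists_eq_add_of_le' hj
  rfl

theorem nthSeq_succ {s : List ℕ+} {i : ℕ} (hi : i < s.length) : nthSeq s (i + 1) = s[i] := by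
  simp [nthSeq, hi]

theorem sle_nil (t : List ℕ+) : sle [] t :=
  Or.inr ⟨Nat.zero_le _, fun _ h1 h2 => absurd h2 (by simp; omega)⟩

theorem not_sle_cons_nil (a : ℕ+) (s : List ℕ+) : ¬ sle (a :: s) [] := by
  rintro (⟨j, hj1, hj, -⟩ | ⟨hlen, -⟩)
  · simp at hj
    omega
  · simp at hlen

theorem sle_cons_cons_iff {a b : ℕ+} {s t : List ℕ+} :
    sle (a :: s) (b :: t) ↔ a < b ∨ a = b ∧ sle s t := by
  simp only [sle, List.length_cons, Nat.add_min_add_right]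
  constructor
  · rintro (⟨_ | _ | j, hj1, hj, hpre, hlt⟩ | ⟨hlen, hpre⟩)
    · omega
    · exact Or.inl ((PNat.coe_lt_coe _ _).1 hlt)
    · refine Or.inr ⟨PNat.coe_injective (hpre 1 le_rfl (by omega)), Or.inl ⟨j + 1, by omega,
        by omega, fun i h1 h2 => ?_, ?_⟩⟩
      · simpa [nthSeq_cons_succ _ _ h1] using hpre (i + 1) (by omega) (by omega)
      · simpa [nthSeq_cons_succ _ _ (Nat.le_add_left 1 j)] using hlt
    · refine Or.inr ⟨PNat.coe_injective (hpre 1 le_rfl (by omega)), Or.inr ⟨by omega,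
        fun i h1 h2 => ?_⟩⟩
      simpa [nthSeq_cons_succ _ _ h1] using hpre (i + 1) (by omega) (by omega)
  · rintro (hab | ⟨rfl, ⟨j, hj1, hj, hpre, hlt⟩ | ⟨hlen, hpre⟩⟩)
    · exact Or.inl ⟨1, le_rfl, by omega, fun i h1 h2 => by omega, (PNat.coe_lt_coe _ _).2 hab⟩
    · refine Or.inl ⟨j + 1, by omega, by omega, fun i h1 h2 => ?_, ?_⟩
      · rcases i with _ | _ | i
        · omega
        · rfl
        · simpa [nthSeq_cons_succ] using hpre (i + 1) (by omega) (by omega)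
      · simpa [nthSeq_cons_succ _ _ hj1] using hlt
    · refine Or.inr ⟨by omega, fun i h1 h2 => ?_⟩
      rcases i with _ | _ | i
      · omega
      · rfl
      · simpa [nthSeq_cons_succ] using hpre (i + 1) (by omega) (by omega)

theorem slt_iff_lt {s t : List ℕ+} : slt s t ↔ s < t := by
  induction s generalizing t with
  | nil => cases t <;> simp [slt, sle_nil]
  | cons a s ih =>
    cases t with
    | nil => simp [slt, not_sle_cons_nil]
    | cons b t =>
      rw [slt, sle_cons_cons_iff, List.cons_lt_cons_iff, ← ih, slt]
      constructor
      · rintro ⟨hab | ⟨rfl, hst⟩, hne⟩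
        · exact Or.inl hab
        · exact Or.inr ⟨rfl, hst, fun h => hne (h ▸ rfl)⟩
      · rintro (hab | ⟨rfl, hst, hne⟩)
        · exact ⟨Or.inl hab, fun h => hab.ne (List.cons.inj h).1⟩
        · exact ⟨Or.inr ⟨rfl, hst⟩, fun h => hne (List.cons.inj h).2⟩

theorem List.lt_append_singleton_iff_of_covBy {α : Type*} [LinearOrder α] {a b : α}
    (hab : a ⋖ b) (s t : List α) : t < s ++ [b] ↔ t < s ++ [a] ∨ s ++ [a] <+: t := by
  induction s generalizing t with
  | nil =>
    cases t with
    | nil => simp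
    | cons c t => simp [List.cons_lt_cons_iff, hab.lt_iff_le_left, le_iff_lt_or_eq, eq_comm]
  | cons d s ih =>
    cases t with
    | nil => simp
    | cons c t => simp [List.cons_lt_cons_iff, ih, eq_comm, or_assoc, and_or_left]

/-- In the paper's 1-based indexing, `r ∈ shiftedBSet b` says `r i ≤ b + i`: these are the tails
that may follow a sequence of `B_b` inside `B`. -/
def shiftedBSet (b : ℕ) : Set (List ℕ+) := {r | ∀ i : Fin r.length, (r.get i : ℕ) ≤ b + i + 1}

theorem cons_mem_shiftedBSet_iff {b : ℕ} {a : ℕ+} {r : List ℕ+} :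
    a :: r ∈ shiftedBSet b ↔ (a : ℕ) ≤ b + 1 ∧ r ∈ shiftedBSet (b + 1) := by
  simp only [shiftedBSet, Set.mem_ofPred_eq, List.length_cons, Fin.forall_fin_succ]
  simp [Nat.add_right_comm _ 1, Nat.add_assoc]

theorem append_mem_shiftedBSet_iff {b : ℕ} {u r : List ℕ+} :
    u ++ r ∈ shiftedBSet b ↔ u ∈ shiftedBSet b ∧ r ∈ shiftedBSet (b + u.length) := by
  induction u generalizing b with
  | nil => simp [shiftedBSet]
  | cons a u ih =>
    simp only [List.cons_append, cons_mem_shiftedBSet_iff, ih, List.length_cons, and_assoc,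
      Nat.add_right_comm b 1, Nat.add_assoc]

theorem mem_BSet_iff {s : List ℕ+} : s ∈ BSet ↔ s ≠ [] ∧ s ∈ shiftedBSet 0 := by
  refine and_congr List.length_pos_iff ⟨fun h i => ?_, fun h j hj1 hj => ?_⟩
  · simpa [nthSeq_succ] using h (i + 1) (by omega) i.2
  · obtain ⟨i, rfl⟩ := Nat.exists_eq_add_of_le' hj1
    simpa [nthSeq_succ (Nat.succ_le_iff.1 hj)] using h ⟨i, hj⟩

theorem append_mem_BSet_iff {u r : List ℕ+} (hu : u ∈ BSet) :
    u ++ r ∈ BSet ↔ r ∈ shiftedBSet u.length := by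
  rw [mem_BSet_iff] at hu
  simp [mem_BSet_iff, append_mem_shiftedBSet_iff, hu]

theorem append_singleton_mem_BSet {s : List ℕ+} (hs : s ∈ BSet) {m : ℕ+}
    (hm : (m : ℕ) ≤ s.length + 1) : s ++ [m] ∈ BSet := by
  rw [append_mem_BSet_iff hs, cons_mem_shiftedBSet_iff]
  exact ⟨hm, fun i => i.elim0⟩

def finEquivPNatLe (c : ℕ) : {x : ℕ+ // (x : ℕ) ≤ c} ≃ Fin c where
  toFun x := ⟨x.1 - 1, by have := x.1.pos; have := x.2; omega⟩
  invFun j := ⟨j.1.succPNat, j.2⟩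
  left_inv x := Subtype.ext (PNat.eq (by have := x.1.pos; simp; omega))
  right_inv j := Fin.ext (by simp)

def shiftedBSetEquiv (b : ℕ) : shiftedBSet b ≃ Σ k, ∀ i : Fin k, Fin (b + i + 1) :=
  (List.equivSigmaTuple.subtypeEquiv
    (q := fun p : Σ k, Fin k → ℕ+ => ∀ i, (p.2 i : ℕ) ≤ b + i + 1) fun _ => Iff.rfl).trans <|
  (⟨fun p => ⟨p.1.1, p.1.2, p.2⟩, fun p => ⟨⟨p.1, p.2.1⟩, p.2.2⟩, fun _ => rfl, fun _ => rfl⟩ :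
    _ ≃ Σ k, {f : Fin k → ℕ+ // ∀ i, (f i : ℕ) ≤ b + i + 1}).trans <|
  Equiv.sigmaCongrRight fun _ =>
    Equiv.subtypePiEquivPi.trans (Equiv.piCongrRight fun _ => finEquivPNatLe _)

theorem shiftedBSetEquiv_fst (b : ℕ) (r : shiftedBSet b) :
    (shiftedBSetEquiv b r).1 = r.1.length :=
  rfl

theorem card_pi_fin_eq_ascFactorial (b k : ℕ) :
    Fintype.card (∀ i : Fin k, Fin (b + i + 1)) = (b + 1).ascFactorial k := by
  simp [Fintype.card_pi, Nat.ascFactorial_eq_prod_range, Fin.prod_univ_eq_prod_range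
    (fun i => b + i + 1), Nat.add_right_comm]

theorem lam_pos (n : ℕ) : 0 < lam n := by
  unfold lam
  positivity

theorem ascFactorial_mul_lam (b k : ℕ) :
    ((b + 1).ascFactorial k : ℝ) * lam (b + k) = lam b * (1 / 2) ^ k := by
  simp only [lam, ← Nat.factorial_mul_ascFactorial b k, pow_add, one_div_pow]
  push_cast
  field_simp

theorem hasSum_lam_shiftedBSet (b : ℕ) :
    HasSum (fun r : shiftedBSet b => lam (b + r.1.length)) (2 * lam b) := by
  let f : (Σ k, ∀ i : Fin k, Fin (b + i + 1)) → ℝ := fun p => lam (b + p.1)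
  have hfiber (k : ℕ) : HasSum (fun x => f ⟨k, x⟩) (lam b * (1 / 2) ^ k) := by
    rw [← ascFactorial_mul_lam, ← card_pi_fin_eq_ascFactorial]
    convert hasSum_fintype (fun x => f ⟨k, x⟩)
    simp [f]
  have hgeom : HasSum (fun k : ℕ => lam b * (1 / 2) ^ k) (2 * lam b) := by
    simpa [mul_comm] using hasSum_geometric_two.mul_left (lam b)
  have hf : Summable f := (summable_sigma_of_nonneg fun p => (lam_pos _).le).2
    ⟨fun k => (hfiber k).summable, hgeom.summable.congr fun k => (hfiber k).tsum_eq.symm⟩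
  have h := (shiftedBSetEquiv b).hasSum_iff.2 (hgeom.sigma_of_hasSum hfiber hf)
  simpa only [Function.comp_def, f, shiftedBSetEquiv_fst] using h

def appendEquiv {u : List ℕ+} (hu : u ∈ BSet) :
    shiftedBSet u.length ≃ {t | t ∈ BSet ∧ u <+: t} where
  toFun r := ⟨u ++ r, (append_mem_BSet_iff hu).2 r.2, List.prefix_append _ _⟩
  invFun t := ⟨t.1.drop u.length, by
    rw [← append_mem_BSet_iff hu, List.prefix_iff_eq_append.1 t.2.2]
    exact t.2.1⟩
  left_inv r := by simp
  right_inv t := Subtype.ext (List.prefix_iff_eq_append.1 t.2.2)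

theorem hasSum_lam_extensions {u : List ℕ+} (hu : u ∈ BSet) :
    HasSum (fun t : {t | t ∈ BSet ∧ u <+: t} => lam t.1.length) (2 * lam u.length) := by
  rw [← (appendEquiv hu).hasSum_iff]
  simpa [Function.comp_def, appendEquiv] using hasSum_lam_shiftedBSet u.length

theorem summable_lam_of_subset_BSet {S : Set (List ℕ+)} (hS : S ⊆ BSet) :
    Summable (fun t : S => lam t.1.length) := by
  have hB : S ⊆ shiftedBSet 0 := fun t ht => (mem_BSet_iff.1 (hS ht)).2
  simpa [Function.comp_def] using
    (hasSum_lam_shiftedBSet 0).summable.comp_injective (Set.inclusion_injective hB)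

theorem hasSum_tau (s : List ℕ+) :
    HasSum (fun t : {t | t ∈ BSet ∧ slt t s} => lam t.1.length) (tau s) :=
  (summable_lam_of_subset_BSet fun _ ht => ht.1).hasSum

theorem setOf_slt_append_succ (s : List ℕ+) (m : ℕ+) :
    {t | t ∈ BSet ∧ slt t (s ++ [m + 1])} =
      {t | t ∈ BSet ∧ slt t (s ++ [m])} ∪ {t | t ∈ BSet ∧ s ++ [m] <+: t} := by
  ext t
  simp [slt_iff_lt, List.lt_append_singleton_iff_of_covBy (Order.covBy_add_one m), and_or_left]

theorem disjoint_setOf_slt_prefix (u : List ℕ+) :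
    Disjoint {t | t ∈ BSet ∧ slt t u} {t | t ∈ BSet ∧ u <+: t} :=
  Set.disjoint_left.2 fun _ hlt hpre => List.not_lt.2 hpre.2.le (slt_iff_lt.1 hlt.2)

/-- Let `s ∈ B_n` and `1 ≤ m ≤ n`. Then `τ (s + ⟨m+1⟩) - τ (s + ⟨m⟩) = 2 λ (n+1)`. -/
theorem tau_append_succ_sub (n : ℕ) (s : List ℕ+) (hs : s ∈ BSet) (hlen : s.length = n)
    (m : ℕ+) (hm : (m : ℕ) ≤ n) :
    tau (s ++ [m + 1]) - tau (s ++ [m]) = 2 * lam (n + 1) := by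
  have hu : s ++ [m] ∈ BSet := append_singleton_mem_BSet hs (by omega)
  have hsplit := HasSum.add_disjoint (f := fun t : List ℕ+ => lam t.length)
    (disjoint_setOf_slt_prefix _) (hasSum_tau (s ++ [m])) (hasSum_lam_extensions hu)
  rw [← setOf_slt_append_succ] at hsplit
  rw [(hasSum_tau _).unique hsplit, List.length_append, hlen]
  simp
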